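/- arXiv:2305.05353 — 4 statements merged into one kernel-verified Lean document; each statement's English description precedes it below -/
import Mathlib

section
/- For all real a ≥ 1 and all real h with 1 ≤ h ≤ n/a, it holds that η(a·h) ≤ 2a·η(h). -/
open scoped BigOperators Classical
open MeasureTheory

noncomputable section

/-- A finite matroid on ground set `E`, given by its rank function. -/
structure FinMatroid (α : Type*) [DecidableEq α] where
  E : Finset α
  r : Finset α → ℕ
  rank_le_card : ∀ A : Finset α, r A ≤ A.card
  rank_mono : ∀ ⦃A B : Finset α⦄, A ⊆ B → r A ≤ r B
  rank_submod : ∀ A B : Finset α, r (A ∪ B) + r (A ∩ B) ≤ r A + r B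

variable {α : Type*} [DecidableEq α]

/-- Independence in terms of the rank function. -/
def FinMatroid.Indep (M : FinMatroid α) (I : Finset α) : Prop :=
  I ⊆ M.E ∧ M.r I = I.card

/-- The span (closure) of a set. -/
def FinMatroid.span (M : FinMatroid α) (A : Finset α) : Finset α :=
  M.E.filter fun e => M.r (insert e A) = M.r A

/-- `M.D S lam` : the unique inclusion-wise maximal maximizer of `|U| - lam * r U`
over `U ⊆ S`, realized as the union of all maximizers. -/
def FinMatroid.D (M : FinMatroid α) (S : Finset α) (lam : ℝ) : Finset α :=
  (S.powerset.filter fun U =>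
      ∀ V ∈ S.powerset, (V.card : ℝ) - lam * M.r V ≤ (U.card : ℝ) - lam * M.r U).sup id

/-- The rank-density curve of `M`. -/
def FinMatroid.rdCurve (M : FinMatroid α) : ℝ → ℝ := fun t =>
  sSup {lam : ℝ | 0 ≤ lam ∧ t ≤ (M.r (M.D M.E lam) : ℝ)}

/-- Restriction of a matroid to a subset. -/
def FinMatroid.restrict (M : FinMatroid α) (T : Finset α) : FinMatroid α where
  E := M.E ∩ T
  r := fun A => M.r (A ∩ T)
  rank_le_card := fun A =>
    (M.rank_le_card _).trans (Finset.card_le_card Finset.inter_subset_left)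
  rank_mono := fun A B hAB =>
    M.rank_mono (Finset.inter_subset_inter hAB (Finset.Subset.refl T))
  rank_submod := fun A B => by
    have h1 : (A ∪ B) ∩ T = (A ∩ T) ∪ (B ∩ T) := by ext x; simp only [Finset.mem_inter, Finset.mem_union]; tauto
    have h2 : (A ∩ B) ∩ T = (A ∩ T) ∩ (B ∩ T) := by ext x; simp only [Finset.mem_inter]; tauto
    rw [h1, h2]; exact M.rank_submod _ _

/-- `eta n w a` : the expected maximum weight among a uniformly random subset of
`⌊a⌋` of the `n` weights `w`, with value `0` for `a < 1`. -/
def eta (n : ℕ) (w : Fin n → ℝ) (a : ℝ) : ℝ :=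
  if a < 1 then 0 else
    (∑ R ∈ Finset.powersetCard ⌊a⌋.toNat (Finset.univ : Finset (Fin n)),
        R.fold max 0 w) /
      ((Finset.powersetCard ⌊a⌋.toNat (Finset.univ : Finset (Fin n))).card : ℝ)

/-- `FF n w ρ = ∫_0^∞ η(ρ(t)) dt`. -/
def FF (n : ℕ) (w : Fin n → ℝ) (ρ : ℝ → ℝ) : ℝ :=
  ∫ t in Set.Ioi (0 : ℝ), eta n w (ρ t)

/-- The `(a, b)`-downshift of a curve `ρ`. -/
def downshift (ρ : ℝ → ℝ) (a b : ℝ) : ℝ → ℝ := fun t =>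
  let φ : ℝ := if t ≤ 1 then ρ a / b else ρ (a * t) / b
  if 0 < φ ∧ φ < 1 then 1 else φ

/-- `ρt` is an `(a,b)`-approximation of `ρ`: it is non-increasing and nonnegative on
`(0,∞)` and squeezed between the `(a,b)`-downshift of `ρ` and `ρ` on `(0,∞)`. -/
def IsApprox (a b : ℝ) (ρ ρt : ℝ → ℝ) : Prop :=
  AntitoneOn ρt (Set.Ioi 0) ∧ (∀ t, 0 < t → 0 ≤ ρt t) ∧
    ∀ t, 0 < t → downshift ρ a b t ≤ ρt t ∧ ρt t ≤ ρ t

/-- Probability of event `P` for a random subset `S ⊆ N` including each element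
independently with probability `1/2`. -/
def prHalf (N : Finset α) (P : Finset α → Prop) : ℝ :=
  ((N.powerset.filter P).card : ℝ) / 2 ^ N.card




/-!
Write `E j` for the expected maximum over a uniformly random `j`-subset. Removing one element
from a `(j+1)`-set `R` loses its maximum at most once, so the `j + 1` maxima of the `j`-subsets
of `R` add up to at least `j · max R`; double counting turns this into
`E (j+1) / (j+1) ≤ E j / j`. Hence with `k = ⌊h⌋` and `m = ⌊a h⌋ ≤ a h ≤ 2 a k` we get
`E m ≤ (m / k) E k ≤ 2 a E k`.
-/

open Finset

namespace Finset

variable {ι M : Type*}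

lemma fold_max_zero_nonneg (w : ι → ℝ) (R : Finset ι) : 0 ≤ R.fold max 0 w :=
  (le_fold_max 0).2 (Or.inl le_rfl)

variable [DecidableEq ι]

lemma card_sub_one_mul_fold_max_le_sum_fold_max_erase (w : ι → ℝ) (R : Finset ι) :
    ((#R - 1 : ℕ) : ℝ) * R.fold max 0 w ≤ ∑ i ∈ R, (R.erase i).fold max 0 w := by
  rcases R.eq_empty_or_nonempty with rfl | hR
  · simp
  obtain ⟨i₀, hi₀, hmax⟩ := R.exists_max_image w hR
  have hle : ∀ i ∈ R.erase i₀, R.fold max 0 w ≤ (R.erase i).fold max 0 w := fun i hi =>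
    (fold_max_le _).2 ⟨fold_max_zero_nonneg w _, fun x hx => (hmax x hx).trans <|
      (le_fold_max _).2 (Or.inr ⟨i₀, mem_erase.2 ⟨(ne_of_mem_erase hi).symm, hi₀⟩, le_rfl⟩)⟩
  calc ((#R - 1 : ℕ) : ℝ) * R.fold max 0 w = ∑ _i ∈ R.erase i₀, R.fold max 0 w := by
        rw [sum_const, card_erase_of_mem hi₀, nsmul_eq_mul]
    _ ≤ ∑ i ∈ R.erase i₀, (R.erase i).fold max 0 w := sum_le_sum hle
    _ ≤ ∑ i ∈ R, (R.erase i).fold max 0 w :=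
        sum_le_sum_of_subset_of_nonneg (erase_subset _ _) fun _ _ _ => fold_max_zero_nonneg w _

variable [Fintype ι] [AddCommMonoid M]

/-- Each `j`-set `S` arises as `R.erase i` from exactly the `card ι - j` pairs `(insert i S, i)`. -/
lemma sum_powersetCard_succ_sum_erase (f : Finset ι → M) (j : ℕ) :
    ∑ R ∈ powersetCard (j + 1) univ, ∑ i ∈ R, f (R.erase i)
      = (Fintype.card ι - j) • ∑ S ∈ powersetCard j univ, f S := by
  rw [sum_sigma', smul_sum]
  have hconst : ∀ S ∈ powersetCard j (univ : Finset ι),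
      (Fintype.card ι - j) • f S = ∑ _i ∈ Sᶜ, f S := by
    intro S hS
    rw [sum_const, card_compl, (mem_powersetCard_univ.1 hS)]
  rw [sum_congr rfl hconst, sum_sigma']
  refine sum_nbij' (fun x => ⟨x.1.erase x.2, x.2⟩) (fun y => ⟨insert y.2 y.1, y.2⟩)
    ?_ ?_ ?_ ?_ (fun _ _ => rfl)
  · rintro ⟨R, i⟩ hx
    simp only [mem_sigma, mem_powersetCard_univ, mem_compl] at hx ⊢
    exact ⟨by rw [card_erase_of_mem hx.2, hx.1, Nat.add_sub_cancel], notMem_erase i R⟩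
  · rintro ⟨S, i⟩ hy
    simp only [mem_sigma, mem_powersetCard_univ, mem_compl] at hy ⊢
    exact ⟨by rw [card_insert_of_notMem hy.2, hy.1], mem_insert_self i S⟩
  · rintro ⟨R, i⟩ hx
    rw [insert_erase (mem_sigma.1 hx).2]
  · rintro ⟨S, i⟩ hy
    rw [erase_insert (mem_compl.1 (mem_sigma.1 hy).2)]

end Finset

section ExpectedMax

variable {ι : Type*} [Fintype ι]

def sumMaxOfCard (w : ι → ℝ) (j : ℕ) : ℝ :=
  ∑ R ∈ powersetCard j univ, R.fold max 0 w

def expectedMax (w : ι → ℝ) (j : ℕ) : ℝ :=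
  sumMaxOfCard w j / (Fintype.card ι).choose j

lemma sumMaxOfCard_nonneg (w : ι → ℝ) (j : ℕ) : 0 ≤ sumMaxOfCard w j :=
  sum_nonneg fun R _ => fold_max_zero_nonneg w R

lemma expectedMax_nonneg (w : ι → ℝ) (j : ℕ) : 0 ≤ expectedMax w j :=
  div_nonneg (sumMaxOfCard_nonneg w j) (Nat.cast_nonneg _)

variable [DecidableEq ι]

lemma mul_sumMaxOfCard_succ_le (w : ι → ℝ) (j : ℕ) :
    j * sumMaxOfCard w (j + 1) ≤ (Fintype.card ι - j : ℕ) * sumMaxOfCard w j := by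
  rw [sumMaxOfCard, sumMaxOfCard, ← nsmul_eq_mul (Fintype.card ι - j),
    ← sum_powersetCard_succ_sum_erase, mul_sum]
  refine sum_le_sum fun R hR => ?_
  have h := card_sub_one_mul_fold_max_le_sum_fold_max_erase w R
  rwa [mem_powersetCard_univ.1 hR, Nat.add_sub_cancel] at h

lemma expectedMax_succ_div_le (w : ι → ℝ) {j : ℕ} (hj : 1 ≤ j) :
    expectedMax w (j + 1) / (j + 1 : ℕ) ≤ expectedMax w j / j := by
  have hj' : (0 : ℝ) < j := by exact_mod_cast hj
  rcases lt_or_ge (Fintype.card ι) (j + 1) with hcard | hcard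
  · rw [expectedMax, Nat.choose_eq_zero_of_lt hcard, Nat.cast_zero, div_zero, zero_div]
    exact div_nonneg (expectedMax_nonneg w j) hj'.le
  have hchoose : ((Fintype.card ι).choose (j + 1) : ℝ) * (j + 1 : ℕ)
      = (Fintype.card ι).choose j * (Fintype.card ι - j : ℕ) := by
    exact_mod_cast Nat.choose_succ_right_eq (Fintype.card ι) j
  have hchoose_pos : (0 : ℝ) < (Fintype.card ι).choose j := by
    exact_mod_cast Nat.choose_pos (by omega)
  have hsub_pos : (0 : ℝ) < (Fintype.card ι - j : ℕ) := by
    exact_mod_cast Nat.sub_pos_of_lt hcard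
  rw [expectedMax, expectedMax, div_div, hchoose, div_div,
    div_le_div_iff₀ (by positivity) (by positivity)]
  linarith [mul_le_mul_of_nonneg_left (mul_sumMaxOfCard_succ_le w j) hchoose_pos.le]

lemma expectedMax_div_antitoneOn (w : ι → ℝ) :
    AntitoneOn (fun j : ℕ => expectedMax w j / j) {j | 1 ≤ j} :=
  antitoneOn_nat_Ici_of_succ_le fun _ hj => expectedMax_succ_div_le w hj

end ExpectedMax

lemma eta_eq_expectedMax (n : ℕ) (w : Fin n → ℝ) {a : ℝ} (ha : 1 ≤ a) :
    eta n w a = expectedMax w ⌊a⌋₊ := by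
  rw [eta, if_neg (not_lt.2 ha), Int.floor_toNat, card_powersetCard, card_univ]
  rfl

lemma le_two_mul_natFloor {h : ℝ} (hh : 1 ≤ h) : h ≤ 2 * ⌊h⌋₊ := by
  have h1 : (1 : ℝ) ≤ ⌊h⌋₊ := by exact_mod_cast (Nat.one_le_floor_iff h).2 hh
  linarith [Nat.lt_floor_add_one h]

theorem statement3_general (n : ℕ) (w : Fin n → ℝ)
    (a h : ℝ) (ha : 1 ≤ a) (hh1 : 1 ≤ h) :
    eta n w (a * h) ≤ 2 * a * eta n w h := by
  have hah : h ≤ a * h := le_mul_of_one_le_left (by linarith) ha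
  set k := ⌊h⌋₊
  set m := ⌊a * h⌋₊
  have hk : 1 ≤ k := (Nat.one_le_floor_iff h).2 hh1
  have hk' : (0 : ℝ) < k := by exact_mod_cast hk
  have hm : (m : ℝ) ≤ 2 * a * k := calc
    (m : ℝ) ≤ a * h := Nat.floor_le (by linarith)
    _ ≤ a * (2 * k) := mul_le_mul_of_nonneg_left (le_two_mul_natFloor hh1) (by linarith)
    _ = 2 * a * k := by ring
  have hratio : expectedMax w m / m ≤ expectedMax w k / k :=
    expectedMax_div_antitoneOn w hk (hk.trans (Nat.floor_le_floor hah)) (Nat.floor_le_floor hah)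
  have hm' : (0 : ℝ) < m := hk'.trans_le (by exact_mod_cast Nat.floor_le_floor hah)
  rw [eta_eq_expectedMax n w (hh1.trans hah), eta_eq_expectedMax n w hh1]
  calc expectedMax w m = m * (expectedMax w m / m) := by field_simp
    _ ≤ 2 * a * k * (expectedMax w k / k) :=
        mul_le_mul hm hratio (div_nonneg (expectedMax_nonneg w m) hm'.le) (by positivity)
    _ = 2 * a * expectedMax w k := by field_simp

theorem statement3 (n : ℕ) (w : Fin n → ℝ) (hw : ∀ i, 0 ≤ w i)
    (a h : ℝ) (ha : 1 ≤ a) (hh1 : 1 ≤ h) (hh2 : h ≤ n / a) :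
    eta n w (a * h) ≤ 2 * a * eta n w h :=
  statement3_general n w a h ha hh1

end
end

section
/- Let M = (N, I) be a finite matroid that contains 3h pairwise disjoint bases for some integer h ≥ 1, and let S ⊆ N be a random subset containing each element of N independently with probability 1/2. Then Pr[ |span(D_M(S, h)) ∖ S| ≤ |N|/12 ] ≤ exp(−|N|/144). -/
open scoped BigOperators Classical
open MeasureTheory

noncomputable section

variable {α : Type*} [DecidableEq α]

/-!
Reveal `S` one element at a time and, before each element `e`, predict `e ∈ S` exactly when `e`
is spanned by `D(R, h)`, where `R` is the part of `S` revealed so far. The set of wrong predictions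
determines `S`, so a Chernoff count bounds the number of `S` with few of them. A wrong prediction
`e ∉ S` lies in `span D(S, h) \ S`, because `D(·, h)` is monotone. The wrong predictions `e ∈ S`
form an `h`-sparse set (every subset `U` has `|U| ≤ h r(U)`), because adding to a sparse `W` an
element outside `span D(W, h)` keeps it sparse; so there are at most `h r(N) ≤ |N|/3` of them, the
`3h` disjoint bases giving the last inequality. On the event, there are therefore at most
`5|N|/12` wrong predictions in all.
-/

open Finset

namespace FinMatroid

variable {M : FinMatroid α}

lemma r_insert_le (M : FinMatroid α) (A : Finset α) (e : α) : M.r (insert e A) ≤ M.r A + 1 := by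
  have hsub := M.rank_submod A {e}
  have hsingle := M.rank_le_card {e}
  rw [union_singleton, card_singleton] at *
  omega

lemma mem_span {A : Finset α} {e : α} : e ∈ M.span A ↔ e ∈ M.E ∧ M.r (insert e A) = M.r A := by
  simp [span]

lemma span_mono {A B : Finset α} (hAB : A ⊆ B) : M.span A ⊆ M.span B := by
  intro e he
  rw [mem_span] at he ⊢
  refine ⟨he.1, le_antisymm ?_ (M.rank_mono (subset_insert _ _))⟩
  have hsub := M.rank_submod (insert e A) B
  rw [insert_union, union_eq_right.2 hAB, he.2] at hsub
  have := M.rank_mono (subset_inter (subset_insert e A) hAB)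
  omega

def IsDensest (M : FinMatroid α) (S : Finset α) (lam : ℝ) (U : Finset α) : Prop :=
  U ⊆ S ∧ ∀ V ⊆ S, (#V : ℝ) - lam * M.r V ≤ #U - lam * M.r U

lemma card_sub_mul_r_add_le (M : FinMatroid α) {lam : ℝ} (hlam : 0 ≤ lam) (U V : Finset α) :
    ((#U : ℝ) - lam * M.r U) + (#V - lam * M.r V) ≤
      (#(U ∪ V) - lam * M.r (U ∪ V)) + (#(U ∩ V) - lam * M.r (U ∩ V)) := by
  have hcard : (#(U ∪ V) : ℝ) + #(U ∩ V) = #U + #V := by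
    exact_mod_cast card_union_add_card_inter U V
  have hr : (M.r (U ∪ V) : ℝ) + M.r (U ∩ V) ≤ M.r U + M.r V := by
    exact_mod_cast M.rank_submod U V
  nlinarith

lemma IsDensest.union {S S' U V : Finset α} {lam : ℝ} (hlam : 0 ≤ lam)
    (hU : M.IsDensest S lam U) (hV : M.IsDensest S' lam V) (hSS' : S ⊆ S') :
    M.IsDensest S' lam (U ∪ V) := by
  refine ⟨union_subset (hU.1.trans hSS') hV.1, fun W hW => ?_⟩
  have := M.card_sub_mul_r_add_le hlam U V
  have := hU.2 (U ∩ V) (inter_subset_left.trans hU.1)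
  have := hV.2 W hW
  linarith

lemma isDensest_iff_mem_filter {S U : Finset α} {lam : ℝ} :
    M.IsDensest S lam U ↔ U ∈ S.powerset.filter fun U =>
      ∀ V ∈ S.powerset, (#V : ℝ) - lam * M.r V ≤ #U - lam * M.r U := by
  simp only [IsDensest, mem_filter, mem_powerset]

lemma IsDensest.subset_D {S U : Finset α} {lam : ℝ} (hU : M.IsDensest S lam U) :
    U ⊆ M.D S lam :=
  le_sup (f := id) (isDensest_iff_mem_filter.1 hU)

lemma isDensest_D (S : Finset α) {lam : ℝ} (hlam : 0 ≤ lam) : M.IsDensest S lam (M.D S lam) := by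
  obtain ⟨U, hUS, hU⟩ := S.powerset.exists_max_image (fun U => (#U : ℝ) - lam * M.r U)
    ⟨∅, empty_mem_powerset S⟩
  have hne : (S.powerset.filter fun U =>
      ∀ V ∈ S.powerset, (#V : ℝ) - lam * M.r V ≤ #U - lam * M.r U).Nonempty :=
    ⟨U, mem_filter.2 ⟨hUS, hU⟩⟩
  rw [D, ← sup'_eq_sup hne]
  exact sup'_induction hne id (fun U hU V hV => hU.union hlam hV subset_rfl)
    fun U hU => isDensest_iff_mem_filter.2 hU

lemma D_mono {S S' : Finset α} {lam : ℝ} (hlam : 0 ≤ lam) (hSS' : S ⊆ S') :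
    M.D S lam ⊆ M.D S' lam :=
  subset_union_left.trans ((M.isDensest_D S hlam).union hlam (M.isDensest_D S' hlam) hSS').subset_D

def IsSparse (M : FinMatroid α) (h : ℕ) (W : Finset α) : Prop :=
  ∀ U ⊆ W, #U ≤ h * M.r U

variable {h : ℕ} {W : Finset α}

lemma IsSparse.subset_D {V : Finset α} (hW : M.IsSparse h W) (hVW : V ⊆ W)
    (hV : #V = h * M.r V) : V ⊆ M.D W h := by
  refine IsDensest.subset_D ⟨hVW, fun U hU => ?_⟩
  have hU : (#U : ℝ) ≤ h * M.r U := by exact_mod_cast hW U hU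
  have hV : (#V : ℝ) = h * M.r V := by exact_mod_cast hV
  linarith

lemma IsSparse.insert_of_notMem_span (hh : 1 ≤ h) (hW : M.IsSparse h W) {e : α} (heE : e ∈ M.E)
    (he : e ∉ M.span (M.D W h)) : M.IsSparse h (insert e W) := by
  intro U hU
  by_cases heU : e ∈ U
  swap
  · exact hW U ((subset_insert_iff_of_notMem heU).1 hU)
  set V := U.erase e
  have hVW : V ⊆ W := subset_insert_iff.1 hU
  have hUV : insert e V = U := insert_erase heU
  have hcard : #U = #V + 1 := (card_erase_add_one heU).symm
  have hrV : M.r V ≤ M.r U := M.rank_mono (erase_subset e U)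
  have hrU : M.r U ≤ M.r V + 1 := hUV ▸ M.r_insert_le V e
  obtain hr | hr : M.r U = M.r V + 1 ∨ M.r U = M.r V := by omega
  · have := hW V hVW
    rw [hcard, hr, Nat.mul_succ]
    omega
  · -- `e ∈ span V`, so a tight `V` would lie in `D(W, h)` and span `e`
    have hlt : #V < h * M.r V := by
      refine (hW V hVW).lt_of_ne fun hV => he ?_
      exact span_mono (hW.subset_D hVW hV) (mem_span.2 ⟨heE, by rw [hUV, hr]⟩)
    rw [hcard, hr]
    omega

end FinMatroid

-- The list is revealed from its end: the elements of `S` revealed before `e` are `S ∩ l`.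
def surprises (expect : Finset α → α → Prop) (S : Finset α) : List α → Finset α
  | [] => ∅
  | e :: l =>
    if (e ∈ S ↔ expect (S ∩ l.toFinset) e) then surprises expect S l
    else insert e (surprises expect S l)

section Surprises

variable (expect : Finset α → α → Prop) {S S' : Finset α} {e x : α} {l : List α}

lemma mem_surprises_cons : x ∈ surprises expect S (e :: l) ↔
    x ∈ surprises expect S l ∨ x = e ∧ ¬(e ∈ S ↔ expect (S ∩ l.toFinset) e) := by
  rw [surprises]
  split_ifs with hpred <;> simp [hpred, or_comm]

lemma surprises_subset (S : Finset α) : ∀ l : List α, surprises expect S l ⊆ l.toFinset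
  | [] => by simp [surprises]
  | e :: l => fun x hx => by
    rw [mem_surprises_cons] at hx
    rcases hx with hx | ⟨rfl, -⟩
    · exact List.mem_toFinset.2 (List.mem_cons_of_mem e (List.mem_toFinset.1
        (surprises_subset S l hx)))
    · simp

lemma inter_toFinset_eq_of_surprises_eq : ∀ {l : List α}, l.Nodup →
    surprises expect S l = surprises expect S' l → S ∩ l.toFinset = S' ∩ l.toFinset
  | [], _, _ => by simp
  | e :: l, hl, hSS' => by
    rw [List.nodup_cons] at hl
    have hnotMem : ∀ T, e ∉ surprises expect T l := fun T he =>
      hl.1 (List.mem_toFinset.1 (surprises_subset expect T l he))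
    have hrest : surprises expect S l = surprises expect S' l := by
      ext x
      by_cases hx : x = e
      · subst hx; simp only [hnotMem]
      · have := congrArg (x ∈ ·) hSS'
        simpa [mem_surprises_cons, hx] using this
    have ih := inter_toFinset_eq_of_surprises_eq hl.2 hrest
    have he : e ∈ S ↔ e ∈ S' := by
      have := congrArg (e ∈ ·) hSS'
      simp only [mem_surprises_cons, hnotMem, false_or, true_and, ih] at this
      tauto
    rw [List.toFinset_cons]
    by_cases heS : e ∈ S
    · rw [inter_insert_of_mem heS, inter_insert_of_mem (he.1 heS), ih]
    · rw [inter_insert_of_notMem heS, inter_insert_of_notMem (mt he.2 heS), ih]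

lemma card_filter_surprises_le (hl : l.Nodup) (P : ℕ → Prop) :
    #{S ∈ l.toFinset.powerset | P #(surprises expect S l)} ≤ #{T ∈ l.toFinset.powerset | P #T} := by
  refine card_le_card_of_injOn (surprises expect · l) (fun S hS => ?_) fun S hS S' hS' hSS' => ?_
  · rw [coe_filter, Set.mem_ofPred_eq, mem_powerset] at hS
    exact mem_filter.2 ⟨mem_powerset.2 (surprises_subset expect S l), hS.2⟩
  · simp only [coe_filter, Set.mem_ofPred_eq, mem_powerset] at hS hS'
    have := inter_toFinset_eq_of_surprises_eq expect hl hSS'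
    rwa [inter_eq_left.2 hS.1, inter_eq_left.2 hS'.1] at this

end Surprises

namespace FinMatroid

variable {M : FinMatroid α}

lemma surprises_sdiff_subset {lam : ℝ} (hlam : 0 ≤ lam) (S : Finset α) : ∀ l : List α,
    surprises (fun R e => e ∈ M.span (M.D R lam)) S l \ S ⊆ M.span (M.D S lam) \ S
  | [] => by simp [surprises]
  | e :: l => fun x hx => by
    rw [mem_sdiff, mem_surprises_cons] at hx
    rcases hx with ⟨hx | ⟨rfl, hpred⟩, hxS⟩
    · exact surprises_sdiff_subset hlam S l (mem_sdiff.2 ⟨hx, hxS⟩)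
    · have hspan : x ∈ M.span (M.D (S ∩ l.toFinset) lam) := by tauto
      exact mem_sdiff.2 ⟨span_mono (D_mono hlam inter_subset_left) hspan, hxS⟩

lemma isSparse_surprises_inter {h : ℕ} (hh : 1 ≤ h) (S : Finset α) : ∀ l : List α,
    (∀ e ∈ l, e ∈ M.E) → M.IsSparse h (surprises (fun R e => e ∈ M.span (M.D R h)) S l ∩ S)
  | [], _ => fun U hU => by simp_all [surprises]
  | e :: l, hl => by
    have ih := isSparse_surprises_inter hh S l fun x hx => hl x (List.mem_cons_of_mem e hx)
    rw [surprises]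
    split_ifs with hpred
    · exact ih
    by_cases heS : e ∈ S
    · rw [insert_inter_of_mem heS]
      have hrevealed : surprises (fun R e => e ∈ M.span (M.D R h)) S l ∩ S ⊆ S ∩ l.toFinset := by
        rw [inter_comm]
        exact inter_subset_inter_left (surprises_subset _ S l)
      refine ih.insert_of_notMem_span hh (hl e List.mem_cons_self) fun hspan => hpred ?_
      exact iff_of_true heS (span_mono (D_mono (Nat.cast_nonneg h) hrevealed) hspan)
    · rwa [insert_inter_of_notMem heS]

end FinMatroid

lemma card_filter_card_le_le_exp {β : Type*} (s : Finset β) {θ : ℝ} (hθ : 0 ≤ θ) (t : ℝ) :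
    (#{T ∈ s.powerset | (#T : ℝ) ≤ t} : ℝ) ≤ Real.exp (θ * t) * (Real.exp (-θ) + 1) ^ #s := by
  rw [← sum_pow_mul_eq_add_pow, mul_sum]
  calc (#{T ∈ s.powerset | (#T : ℝ) ≤ t} : ℝ)
      = ∑ T ∈ s.powerset with (#T : ℝ) ≤ t, (1 : ℝ) := by simp
    _ ≤ ∑ T ∈ s.powerset with (#T : ℝ) ≤ t,
          Real.exp (θ * t) * (Real.exp (-θ) ^ #T * 1 ^ (#s - #T)) := by
        refine sum_le_sum fun T hT => ?_
        rw [one_pow, mul_one, ← Real.exp_nat_mul, ← Real.exp_add]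
        exact Real.one_le_exp (by nlinarith [(mem_filter.1 hT).2])
    _ ≤ ∑ T ∈ s.powerset, Real.exp (θ * t) * (Real.exp (-θ) ^ #T * 1 ^ (#s - #T)) :=
        sum_le_sum_of_subset_of_nonneg (filter_subset _ _) fun _ _ _ => by positivity

lemma exp_mul_exp_neg_add_one_le : Real.exp (5 / 72) * (Real.exp (-(1 / 6)) + 1) ≤
    2 * Real.exp (-(1 / 144)) := by
  have hsplit : Real.exp (5 / 72) * (Real.exp (-(1 / 6)) + 1) =
      (Real.exp (-(5 / 72)))⁻¹ + (Real.exp (7 / 72))⁻¹ := by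
    rw [mul_add, mul_one, ← Real.exp_add, ← Real.exp_neg, ← Real.exp_neg]
    norm_num [add_comm]
  have h1 := Real.add_one_le_exp (-(5 / 72))
  have h2 := Real.add_one_le_exp (7 / 72)
  have h3 := Real.add_one_le_exp (-(1 / 144))
  rw [hsplit]
  calc (Real.exp (-(5 / 72)))⁻¹ + (Real.exp (7 / 72))⁻¹
      ≤ (67 / 72 : ℝ)⁻¹ + (79 / 72 : ℝ)⁻¹ := by
        gcongr
        · linarith
        · linarith
    _ ≤ 2 * (-(1 / 144) + 1) := by norm_num
    _ ≤ 2 * Real.exp (-(1 / 144)) := by linarith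

lemma card_filter_card_le_five_mul_div_twelve_le {β : Type*} (s : Finset β) :
    (#{T ∈ s.powerset | (#T : ℝ) ≤ 5 * #s / 12} : ℝ) ≤ 2 ^ #s * Real.exp (-#s / 144) :=
  calc (#{T ∈ s.powerset | (#T : ℝ) ≤ 5 * #s / 12} : ℝ)
      ≤ Real.exp (1 / 6 * (5 * #s / 12)) * (Real.exp (-(1 / 6)) + 1) ^ #s :=
        card_filter_card_le_le_exp s (by norm_num) _
    _ = (Real.exp (5 / 72) * (Real.exp (-(1 / 6)) + 1)) ^ #s := by
        rw [mul_pow, ← Real.exp_nat_mul]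
        ring_nf
    _ ≤ (2 * Real.exp (-(1 / 144))) ^ #s := by
        exact pow_le_pow_left₀ (by positivity) exp_mul_exp_neg_add_one_le _
    _ = 2 ^ #s * Real.exp (-#s / 144) := by
        rw [mul_pow, ← Real.exp_nat_mul]
        ring_nf

lemma FinMatroid.card_mul_r_le_card {M : FinMatroid α} {ι : Type*} [Fintype ι] (Bs : ι → Finset α)
    (hsub : ∀ i, Bs i ⊆ M.E) (hcard : ∀ i, #(Bs i) = M.r M.E) (hdisj : Pairwise fun i j => Disjoint (Bs i) (Bs j)) :
    Fintype.card ι * M.r M.E ≤ #M.E :=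
  calc Fintype.card ι * M.r M.E = ∑ i, #(Bs i) := by simp [hcard]
    _ = #(univ.biUnion Bs) := (card_biUnion fun i _ j _ hij => hdisj hij).symm
    _ ≤ #M.E := card_le_card (biUnion_subset.2 fun i _ => hsub i)

theorem statement6 {α : Type*} [DecidableEq α] (M : FinMatroid α) (h : ℕ) (hh : 1 ≤ h)
    (Bs : Fin (3 * h) → Finset α)
    (hBsub : ∀ i, Bs i ⊆ M.E)
    (hBindep : ∀ i, M.r (Bs i) = (Bs i).card)
    (hBbasis : ∀ i, M.r (Bs i) = M.r M.E)
    (hBdisj : ∀ i j, i ≠ j → Disjoint (Bs i) (Bs j)) :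
    prHalf M.E (fun S => ((M.span (M.D S (h : ℝ)) \ S).card : ℝ) ≤ (M.E.card : ℝ) / 12)
      ≤ Real.exp (-(M.E.card : ℝ) / 144) := by
  set n := #M.E
  have hrank : ((3 * h * M.r M.E : ℕ) : ℝ) ≤ n := by
    have := M.card_mul_r_le_card Bs hBsub (fun i => (hBindep i).symm.trans (hBbasis i))
      fun i j => hBdisj i j
    rw [Fintype.card_fin] at this
    exact_mod_cast this
  set surp := fun S => surprises (fun R e => e ∈ M.span (M.D R h)) S M.E.toList
  have hfew : ∀ S ⊆ M.E, (#(M.span (M.D S h) \ S) : ℝ) ≤ n / 12 → (#(surp S) : ℝ) ≤ 5 * n / 12 := by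
    intro S hSE hS
    have hout : #(surp S \ S) ≤ #(M.span (M.D S h) \ S) :=
      card_le_card (M.surprises_sdiff_subset (Nat.cast_nonneg h) S _)
    have hin : #(surp S ∩ S) ≤ h * M.r M.E :=
      (M.isSparse_surprises_inter hh S _ (fun e he => mem_toList.1 he) _ subset_rfl).trans
        (Nat.mul_le_mul_left h (M.rank_mono (inter_subset_right.trans hSE)))
    rw [← card_sdiff_add_card_inter (surp S) S]
    have hout : (#(surp S \ S) : ℝ) ≤ #(M.span (M.D S h) \ S) := by exact_mod_cast hout
    have hin : (#(surp S ∩ S) : ℝ) ≤ h * M.r M.E := by exact_mod_cast hin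
    push_cast at hrank ⊢
    linarith
  have hinj := card_filter_surprises_le (fun R e => e ∈ M.span (M.D R h)) (nodup_toList M.E)
    fun m => (m : ℝ) ≤ 5 * n / 12
  rw [toList_toFinset] at hinj
  rw [prHalf, div_le_iff₀ (by positivity)]
  calc (#{S ∈ M.E.powerset | (#(M.span (M.D S h) \ S) : ℝ) ≤ n / 12} : ℝ)
      ≤ #{S ∈ M.E.powerset | (#(surp S) : ℝ) ≤ 5 * n / 12} := by
        refine Nat.cast_le.2 (card_le_card fun S hS => ?_)
        rw [mem_filter] at hS ⊢
        exact ⟨hS.1, hfew S (mem_powerset.1 hS.1) hS.2⟩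
    _ ≤ #{T ∈ M.E.powerset | (#T : ℝ) ≤ 5 * n / 12} := Nat.cast_le.2 hinj
    _ ≤ 2 ^ n * Real.exp (-n / 144) := card_filter_card_le_five_mul_div_twelve_le M.E
    _ = Real.exp (-n / 144) * 2 ^ n := mul_comm _ _

end
end

section
/- Let M = (N, I) be a finite matroid that contains 3h pairwise disjoint bases for some integer h ≥ 1, and let S ⊆ N be a random subset containing each element of N independently with probability 1/2. Then Pr[ r(D_M(S, h)) ≤ r(N)/8 ] ≤ exp(−r(N)/48). -/
open scoped BigOperators Classical
open MeasureTheory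

noncomputable section

variable {α : Type*} [DecidableEq α]

/-! Let `B` be the union of the `3h` disjoint bases, so `|B| = 3h·r(N)`, and `U = D_M(S, h)`.
Comparing `U` with `U ∪ (S ∩ B)` in the maximization defining `U` gives
`|(S ∩ B) \ U| ≤ h·(r(N) - r(U))`, while each basis meets `U` in an independent subset of `U`,
so `|S ∩ B ∩ U| ≤ 3h·r(U)`. Hence `r(U) ≤ r(N)/8` forces `|S ∩ B| ≤ (5/4)·h·r(N)`, well below
the mean `(3/2)·h·r(N)`, and a Chernoff bound with parameter `5/7` finishes the proof. -/

namespace FinMatroid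

variable (M : FinMatroid α)

lemma rank_empty : M.r ∅ = 0 :=
  Nat.le_zero.mp (by simpa using M.rank_le_card ∅)

lemma card_le_rank_of_subset {A B : Finset α} (hB : M.r B = B.card) (hAB : A ⊆ B) :
    A.card ≤ M.r A := by
  have hsub := M.rank_submod A (B \ A)
  rw [Finset.union_sdiff_of_subset hAB, Finset.inter_sdiff_self, M.rank_empty] at hsub
  have := M.rank_le_card (B \ A)
  have := Finset.card_sdiff_add_card_eq_card hAB
  omega

lemma card_biUnion_inter_le {ι : Type*} [Fintype ι] (Bs : ι → Finset α)
    (hBs : ∀ i, M.r (Bs i) = (Bs i).card) (U : Finset α) :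
    (Finset.univ.biUnion Bs ∩ U).card ≤ Fintype.card ι * M.r U := by
  rw [Finset.biUnion_inter]
  calc (Finset.univ.biUnion fun i => Bs i ∩ U).card
      ≤ ∑ i, (Bs i ∩ U).card := Finset.card_biUnion_le
    _ ≤ ∑ _i : ι, M.r U := Finset.sum_le_sum fun i _ =>
        (M.card_le_rank_of_subset (hBs i) Finset.inter_subset_left).trans
          (M.rank_mono Finset.inter_subset_right)
    _ = Fintype.card ι * M.r U := by simp

/-- The objective maximized by `M.D S lam`. -/
def gain (lam : ℝ) (U : Finset α) : ℝ := U.card - lam * M.r U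

lemma gain_add_gain_le {lam : ℝ} (hlam : 0 ≤ lam) (U V : Finset α) :
    M.gain lam U + M.gain lam V ≤ M.gain lam (U ∪ V) + M.gain lam (U ∩ V) := by
  have hcard : ((U ∪ V).card : ℝ) + (U ∩ V).card = U.card + V.card := by
    exact_mod_cast Finset.card_union_add_card_inter U V
  have hrank : (M.r (U ∪ V) : ℝ) + M.r (U ∩ V) ≤ M.r U + M.r V := by
    exact_mod_cast M.rank_submod U V
  simp only [gain]
  nlinarith

lemma D_subset (S : Finset α) (lam : ℝ) : M.D S lam ⊆ S :=
  Finset.sup_le fun _ hU => Finset.mem_powerset.mp (Finset.mem_filter.mp hU).1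

/-- By supermodularity of the gain, the maximizers are closed under union, so their union
`M.D S lam` is itself a maximizer. -/
lemma gain_le_gain_D {lam : ℝ} (hlam : 0 ≤ lam) {S V : Finset α} (hV : V ⊆ S) :
    M.gain lam V ≤ M.gain lam (M.D S lam) := by
  set A := S.powerset.filter fun U => ∀ W ∈ S.powerset, M.gain lam W ≤ M.gain lam U
  have hne : A.Nonempty := by
    obtain ⟨U, hU, hmax⟩ := Finset.exists_max_image S.powerset (M.gain lam) ⟨∅, by simp⟩
    exact ⟨U, Finset.mem_filter.mpr ⟨hU, hmax⟩⟩
  have hclosed : ∀ U ∈ (A : Set (Finset α)), ∀ U' ∈ (A : Set (Finset α)),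
      U ⊔ U' ∈ (A : Set (Finset α)) := by
    simp only [A, Finset.coe_filter, Finset.mem_powerset, Set.mem_ofPred_eq]
    rintro U ⟨hUS, hUmax⟩ U' ⟨hU'S, hU'max⟩
    have hinter := hUmax (U ∩ U') (Finset.inter_subset_left.trans hUS)
    have hsuper := M.gain_add_gain_le hlam U U'
    exact ⟨Finset.union_subset hUS hU'S, fun W hW => (hU'max W hW).trans (by
      change M.gain lam U' ≤ M.gain lam (U ∪ U'); linarith)⟩
  have hD : M.D S lam ∈ A := by
    have := Finset.sup'_mem (A : Set (Finset α)) hclosed A hne id fun _ hU => hU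
    rwa [Finset.sup'_eq_sup hne id] at this
  exact (Finset.mem_filter.mp hD).2 V (Finset.mem_powerset.mpr hV)

lemma card_sdiff_D_le {lam : ℝ} (hlam : 0 ≤ lam) {S X : Finset α} (hX : X ⊆ S) :
    ((X \ M.D S lam).card : ℝ) ≤ lam * (M.r (M.D S lam ∪ X) - M.r (M.D S lam)) := by
  have hgain := M.gain_le_gain_D hlam (Finset.union_subset (M.D_subset S lam) hX)
  have hcard : ((M.D S lam ∪ X).card : ℝ) = (M.D S lam).card + (X \ M.D S lam).card := by
    rw [← Finset.union_sdiff_self_eq_union,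
      Finset.card_union_of_disjoint Finset.disjoint_sdiff]
    push_cast; ring
  simp only [gain, hcard] at hgain
  linarith

lemma card_inter_biUnion_le_rank_D {ι : Type*} [Fintype ι] (Bs : ι → Finset α)
    (hBs : ∀ i, M.r (Bs i) = (Bs i).card) {S : Finset α} (hS : S ⊆ M.E) {lam : ℝ}
    (hlam : 0 ≤ lam) :
    ((S ∩ Finset.univ.biUnion Bs).card : ℝ)
      ≤ lam * M.r M.E + (Fintype.card ι - lam) * M.r (M.D S lam) := by
  set U := M.D S lam
  set X := S ∩ Finset.univ.biUnion Bs
  have hout := M.card_sdiff_D_le hlam (Finset.inter_subset_left : X ⊆ S)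
  have hin : ((X ∩ U).card : ℝ) ≤ Fintype.card ι * M.r U := by
    have := M.card_biUnion_inter_le Bs hBs U
    have hXU : X ∩ U ⊆ Finset.univ.biUnion Bs ∩ U :=
      Finset.inter_subset_inter_right Finset.inter_subset_right
    exact_mod_cast (Finset.card_le_card hXU).trans this
  have hrank : (M.r (U ∪ X) : ℝ) ≤ M.r M.E := by
    exact_mod_cast M.rank_mono
      (Finset.union_subset ((M.D_subset S lam).trans hS) (Finset.inter_subset_left.trans hS))
  have hsplit : ((X \ U).card : ℝ) + (X ∩ U).card = X.card := by
    exact_mod_cast Finset.card_sdiff_add_card_inter X U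
  nlinarith

end FinMatroid

lemma prHalf_mono {β : Type*} {N : Finset β} {P Q : Finset β → Prop} (hPQ : ∀ S ⊆ N, P S → Q S) :
    prHalf N P ≤ prHalf N Q := by
  unfold prHalf
  gcongr with S hS
  exact hPQ S (Finset.mem_powerset.mp hS)

lemma sum_pow_card_inter {N B : Finset α} (hB : B ⊆ N) (x : ℝ) :
    ∑ S ∈ N.powerset, x ^ (S ∩ B).card = (x + 1) ^ B.card * 2 ^ (N \ B).card := by
  have key := Finset.prod_add (fun e => if e ∈ B then x else 1) (fun _ => (1 : ℝ)) N
  have hlhs :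
      ∏ e ∈ N, ((if e ∈ B then x else 1) + 1) = (x + 1) ^ B.card * 2 ^ (N \ B).card := by
    rw [Finset.prod_congr rfl fun e _ => show (if e ∈ B then x else 1) + 1
        = if e ∈ B then x + 1 else 2 by split <;> norm_num,
      Finset.prod_ite, Finset.prod_const, Finset.prod_const, Finset.filter_mem_eq_inter,
      Finset.inter_eq_right.mpr hB, ← Finset.sdiff_eq_filter]
  have hrhs : ∀ S ∈ N.powerset,
      (∏ e ∈ S, if e ∈ B then x else 1) * ∏ _e ∈ N \ S, (1 : ℝ) = x ^ (S ∩ B).card := by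
    intro S _
    rw [Finset.prod_const_one, mul_one, Finset.prod_ite, Finset.prod_const, Finset.prod_const,
      one_pow, mul_one, Finset.filter_mem_eq_inter]
  rw [hlhs, Finset.sum_congr rfl hrhs] at key
  exact key.symm

/-- Chernoff bound for the lower tail of `|S ∩ B|`. -/
lemma prHalf_card_inter_le {N B : Finset α} (hB : B ⊆ N) (c : ℝ) {x : ℝ} (hx0 : 0 < x)
    (hx1 : x ≤ 1) :
    prHalf N (fun S => ((S ∩ B).card : ℝ) ≤ c) ≤ x ^ (-c) * ((x + 1) / 2) ^ B.card := by
  have hterm : ∀ S, ((S ∩ B).card : ℝ) ≤ c → 1 ≤ x ^ (-c) * x ^ (S ∩ B).card := by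
    intro S hS
    rw [← Real.rpow_natCast, ← Real.rpow_add hx0]
    exact Real.one_le_rpow_of_pos_of_le_one_of_nonpos hx0 hx1 (by linarith)
  have hcount : ((N.powerset.filter fun S => ((S ∩ B).card : ℝ) ≤ c).card : ℝ)
      ≤ x ^ (-c) * ((x + 1) ^ B.card * 2 ^ (N \ B).card) := by
    rw [← sum_pow_card_inter hB, Finset.mul_sum, Finset.card_eq_sum_ones, Nat.cast_sum]
    refine (Finset.sum_le_sum fun S hS => ?_).trans
      (Finset.sum_le_sum_of_subset_of_nonneg (Finset.filter_subset _ _) fun S _ _ => ?_)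
    · exact_mod_cast hterm S (Finset.mem_filter.mp hS).2
    · positivity
  have hpow : (2 : ℝ) ^ N.card = 2 ^ B.card * 2 ^ (N \ B).card := by
    rw [← pow_add, add_comm, Finset.card_sdiff_add_card_eq_card hB]
  unfold prHalf
  rw [div_le_iff₀ (by positivity), hpow, div_pow]
  refine hcount.trans_eq ?_
  field_simp

lemma chernoff_exponent_le : 5 / 4 * Real.log (7 / 5) + 3 * Real.log (6 / 7) ≤ -1 / 48 := by
  have hprod : ((7 : ℝ) / 5) ^ 5 * (6 / 7) ^ 12 ≤ Real.exp (-1 / 12) := by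
    have := Real.add_one_le_exp (-1 / 12 : ℝ)
    norm_num at this ⊢
    linarith
  have := Real.log_le_log (by positivity) hprod
  rw [Real.log_exp, Real.log_mul (by positivity) (by positivity), Real.log_pow,
    Real.log_pow] at this
  push_cast at this
  linarith

lemma rpow_mul_pow_le_exp (n : ℕ) :
    (5 / 7 : ℝ) ^ (-(5 / 4 * (n : ℝ))) * (6 / 7) ^ (3 * n) ≤ Real.exp (-n / 48) := by
  rw [Real.rpow_def_of_pos (by norm_num), ← Real.exp_log (by norm_num : (0 : ℝ) < 6 / 7),
    ← Real.exp_nat_mul, ← Real.exp_add, Real.exp_le_exp,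
    show (5 / 7 : ℝ) = (7 / 5)⁻¹ by norm_num, Real.log_inv]
  push_cast
  nlinarith [chernoff_exponent_le, (Nat.cast_nonneg n : (0 : ℝ) ≤ n)]

theorem statement7 {α : Type*} [DecidableEq α] (M : FinMatroid α) (h : ℕ) (hh : 1 ≤ h)
    (Bs : Fin (3 * h) → Finset α)
    (hBsub : ∀ i, Bs i ⊆ M.E)
    (hBindep : ∀ i, M.r (Bs i) = (Bs i).card)
    (hBbasis : ∀ i, M.r (Bs i) = M.r M.E)
    (hBdisj : ∀ i j, i ≠ j → Disjoint (Bs i) (Bs j)) :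
    prHalf M.E (fun S => (M.r (M.D S (h : ℝ)) : ℝ) ≤ (M.r M.E : ℝ) / 8)
      ≤ Real.exp (-(M.r M.E : ℝ) / 48) := by
  set r := M.r M.E
  set B := Finset.univ.biUnion Bs
  have hBE : B ⊆ M.E := Finset.biUnion_subset.mpr fun i _ => hBsub i
  have hcardB : B.card = 3 * (h * r) := by
    rw [Finset.card_biUnion fun i _ j _ hij => hBdisj i j hij]
    simp [← hBindep, hBbasis, Nat.mul_assoc]
  have hevent : ∀ S ⊆ M.E, (M.r (M.D S h) : ℝ) ≤ r / 8 →
      ((S ∩ B).card : ℝ) ≤ 5 / 4 * ((h * r : ℕ) : ℝ) := by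
    intro S hS hD
    have := M.card_inter_biUnion_le_rank_D Bs hBindep hS (Nat.cast_nonneg h)
    rw [Fintype.card_fin] at this
    push_cast at this ⊢
    nlinarith [(Nat.cast_nonneg h : (0 : ℝ) ≤ h)]
  calc prHalf M.E (fun S => (M.r (M.D S h) : ℝ) ≤ r / 8)
      ≤ prHalf M.E (fun S => ((S ∩ B).card : ℝ) ≤ 5 / 4 * ((h * r : ℕ) : ℝ)) :=
        prHalf_mono hevent
    _ ≤ (5 / 7) ^ (-(5 / 4 * ((h * r : ℕ) : ℝ))) * ((5 / 7 + 1) / 2) ^ B.card :=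
        prHalf_card_inter_le hBE _ (by norm_num) (by norm_num)
    _ ≤ Real.exp (-((h * r : ℕ) : ℝ) / 48) := by
        rw [hcardB, show (5 / 7 + 1) / 2 = (6 / 7 : ℝ) by norm_num]
        exact rpow_mul_pow_le_exp _
    _ ≤ Real.exp (-r / 48) := by
        gcongr
        exact_mod_cast Nat.le_mul_of_pos_left r hh

end
end

section
/- Let M = (N, I) be a finite matroid with rank function r, let h ≥ 1 be an integer, and let B ⊆ N be the union of 3h pairwise disjoint bases of the restriction M|B (equivalently, B is a disjoint union of 3h independent sets of M, each of rank r(B)). Then for every subset A ⊆ B it holds that r(D_M(A, h)) ≥ (|A| − h·r(A)) / (2h). -/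
open scoped BigOperators Classical
open MeasureTheory

noncomputable section

variable {α : Type*} [DecidableEq α]

/-!
The maximal maximizer `D = D_M(A, h)` beats `A` itself, so `|A| - h r(A) ≤ |D| - h r(D)`.
On the other hand `D ⊆ B` meets each of the `3h` independent pieces of `B` in an independent
subset of `D`, so `|D| ≤ 3h · r(D)`. Together, `|A| - h r(A) ≤ 2h · r(D)`.
-/

open Finset

namespace FinMatroid

variable (M : FinMatroid α)

lemma rank_union_le_rank_add_card (S T : Finset α) : M.r (S ∪ T) ≤ M.r S + T.card := by
  induction T using Finset.induction_on with
  | empty => simp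
  | @insert a T ha ih =>
    have hsub := M.rank_submod {a} (S ∪ T)
    have ha_le : M.r {a} ≤ 1 := by simpa using M.rank_le_card {a}
    rw [show S ∪ insert a T = {a} ∪ (S ∪ T) by ext; simp, card_insert_of_notMem ha]
    omega

lemma rank_eq_card_of_subset {S I : Finset α} (hSI : S ⊆ I) (hI : M.r I = I.card) :
    M.r S = S.card := by
  have h := M.rank_union_le_rank_add_card S (I \ S)
  rw [union_sdiff_of_subset hSI, card_sdiff_of_subset hSI] at h
  have := card_le_card hSI
  have := M.rank_le_card S
  omega

lemma card_le_card_mul_rank_of_subset_biUnion {ι : Type*} [Fintype ι] (Bs : ι → Finset α)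
    (hindep : ∀ i, M.r (Bs i) = (Bs i).card) {D : Finset α} (hD : D ⊆ univ.biUnion Bs) :
    D.card ≤ Fintype.card ι * M.r D := by
  have hpiece (i : ι) : (D ∩ Bs i).card ≤ M.r D :=
    (M.rank_eq_card_of_subset inter_subset_right (hindep i)).symm ▸ M.rank_mono inter_subset_left
  calc D.card = (univ.biUnion fun i => D ∩ Bs i).card := by
        rw [← inter_biUnion, inter_eq_left.mpr hD]
    _ ≤ ∑ i, (D ∩ Bs i).card := card_biUnion_le
    _ ≤ ∑ _i : ι, M.r D := sum_le_sum fun i _ => hpiece i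
    _ = Fintype.card ι * M.r D := by simp

def excess (lam : ℝ) (U : Finset α) : ℝ := U.card - lam * M.r U

variable {M} {lam : ℝ}

lemma excess_add_excess_le (hlam : 0 ≤ lam) (U V : Finset α) :
    M.excess lam U + M.excess lam V ≤ M.excess lam (U ∪ V) + M.excess lam (U ∩ V) := by
  have hcard : ((U ∪ V).card : ℝ) + (U ∩ V).card = U.card + V.card := by
    exact_mod_cast card_union_add_card_inter U V
  have hsub : lam * (M.r (U ∪ V) + M.r (U ∩ V) : ℝ) ≤ lam * (M.r U + M.r V) :=
    mul_le_mul_of_nonneg_left (by exact_mod_cast M.rank_submod U V) hlam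
  unfold excess
  linarith

lemma union_maximizes (hlam : 0 ≤ lam) {S U V : Finset α} (hU : U ⊆ S)
    (hUmax : ∀ W ⊆ S, M.excess lam W ≤ M.excess lam U)
    (hVmax : ∀ W ⊆ S, M.excess lam W ≤ M.excess lam V) :
    ∀ W ⊆ S, M.excess lam W ≤ M.excess lam (U ∪ V) := by
  intro W hW
  have hinter := hVmax (U ∩ V) (inter_subset_left.trans hU)
  have := excess_add_excess_le (M := M) hlam U V
  linarith [hUmax W hW]

lemma D_subset_and_maximizes (hlam : 0 ≤ lam) (S : Finset α) :
    M.D S lam ⊆ S ∧ ∀ W ⊆ S, M.excess lam W ≤ M.excess lam (M.D S lam) := by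
  set F := S.powerset.filter fun U => ∀ V ∈ S.powerset, M.excess lam V ≤ M.excess lam U
  obtain ⟨U₀, hU₀, hU₀max⟩ :=
    S.powerset.exists_max_image (M.excess lam) ⟨∅, empty_mem_powerset S⟩
  have hne : F.Nonempty := ⟨U₀, mem_filter.mpr ⟨hU₀, hU₀max⟩⟩
  rw [show M.D S lam = F.sup id from rfl, ← sup'_eq_sup hne]
  refine sup'_induction hne id (p := fun U => U ⊆ S ∧ ∀ W ⊆ S, M.excess lam W ≤ M.excess lam U)
    (fun U ⟨hU, hUmax⟩ V ⟨hV, hVmax⟩ => ⟨union_subset hU hV, union_maximizes hlam hU hUmax hVmax⟩)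
    fun U hU => ?_
  obtain ⟨hUS, hUmax⟩ := mem_filter.mp hU
  exact ⟨mem_powerset.mp hUS, fun W hW => hUmax W (mem_powerset.mpr hW)⟩

end FinMatroid

theorem statement9_general {α : Type*} [DecidableEq α] (M : FinMatroid α) (h : ℕ)
    (B : Finset α)
    (Bs : Fin (3 * h) → Finset α)
    (hunion : B = Finset.univ.biUnion fun i => Bs i)
    (hindep : ∀ i, M.r (Bs i) = (Bs i).card) :
    ∀ A ⊆ B, ((A.card : ℝ) - h * M.r A) / (2 * h) ≤ (M.r (M.D A (h : ℝ)) : ℝ) := by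
  intro A hA
  obtain ⟨hDA, hDmax⟩ := FinMatroid.D_subset_and_maximizes (M := M) (Nat.cast_nonneg h) A
  have hA_le_D := hDmax A subset_rfl
  have hcard := M.card_le_card_mul_rank_of_subset_biUnion Bs hindep (hunion ▸ hDA.trans hA)
  rw [Fintype.card_fin] at hcard
  have hcard' : ((M.D A h).card : ℝ) ≤ 3 * h * M.r (M.D A h) := by exact_mod_cast hcard
  unfold FinMatroid.excess at hA_le_D
  exact div_le_of_le_mul₀ (by positivity) (by positivity) (by linarith)

theorem statement9 {α : Type*} [DecidableEq α] (M : FinMatroid α) (h : ℕ) (hh : 1 ≤ h)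
    (B : Finset α) (hB : B ⊆ M.E)
    (Bs : Fin (3 * h) → Finset α)
    (hunion : B = Finset.univ.biUnion fun i => Bs i)
    (hindep : ∀ i, M.r (Bs i) = (Bs i).card)
    (hsize : ∀ i, (Bs i).card = M.r B)
    (hdisj : ∀ i j, i ≠ j → Disjoint (Bs i) (Bs j)) :
    ∀ A ⊆ B, ((A.card : ℝ) - h * M.r A) / (2 * h) ≤ (M.r (M.D A (h : ℝ)) : ℝ) :=
  statement9_general M h B Bs hunion hindep

end
end
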